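/- arXiv:2212.08126 — 2 statements merged into one kernel-verified Lean document; each statement's English description precedes it below -/
import Mathlib

section
/- Let p ∈ [0,1] and θ ∈ (0, 2−√2). Then sup_{η>0} { −η + (2−θ)²η(η+1)/(4(η+1−p)) } equals −2√((2−θ)²/4 · (1 − (2−θ)²/4) · p(1−p)) + 1 − p + (2−θ)²(2p−1)/4, provided √( (2−θ)²/(4−(2−θ)²) · p(1−p) ) > 1 − p. -/
set_option maxHeartbeats 1000000 in
/-- closed form of sup_{η>0} { −η + (2−θ)²η(η+1)/(4(η+1−p)) }, provided
√((2−θ)²/(4−(2−θ)²)·p(1−p)) > 1 − p. -/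
theorem stmt_11 (p θ : ℝ) (hp : p ∈ Set.Icc (0 : ℝ) 1)
    (hθ : θ ∈ Set.Ioo (0 : ℝ) (2 - Real.sqrt 2))
    (hcond : Real.sqrt ((2 - θ) ^ 2 / (4 - (2 - θ) ^ 2) * (p * (1 - p))) > 1 - p) :
    sSup ((fun η : ℝ => -η + (2 - θ) ^ 2 * η * (η + 1) / (4 * (η + 1 - p))) '' Set.Ioi 0) =
      -2 * Real.sqrt ((2 - θ) ^ 2 / 4 * (1 - (2 - θ) ^ 2 / 4) * (p * (1 - p))) +
        1 - p + (2 - θ) ^ 2 * (2 * p - 1) / 4 := by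
  obtain ⟨hp0, hp1⟩ := hp
  obtain ⟨hθ0, hθ2⟩ := hθ
  have hs2 : Real.sqrt 2 < 2 - θ := by linarith
  have hsqrt2 : Real.sqrt 2 ^ 2 = 2 := Real.sq_sqrt (by norm_num)
  have hsqrt2nn : (0:ℝ) ≤ Real.sqrt 2 := Real.sqrt_nonneg 2
  obtain ⟨s, hs_def⟩ : ∃ s : ℝ, s = (2 - θ) ^ 2 / 4 := ⟨_, rfl⟩
  have hs_half : (1:ℝ)/2 < s := by rw [hs_def]; nlinarith
  have hs_one : s < 1 := by rw [hs_def]; nlinarith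
  have h1s : (1:ℝ) - s ≠ 0 := by linarith
  have hq0 : 0 ≤ p * (1 - p) := mul_nonneg hp0 (by linarith)
  have h4ne : (4 - (2 - θ)^2) ≠ 0 := by
    have : (2 - θ)^2 < 4 := by nlinarith
    linarith
  have harg : (2 - θ) ^ 2 / (4 - (2 - θ) ^ 2) * (p * (1 - p)) = s * (p * (1 - p)) / (1 - s) := by
    rw [hs_def]
    rw [hs_def] at h1s
    field_simp
  obtain ⟨u0, hu0_def⟩ : ∃ u0 : ℝ, u0 = Real.sqrt (s * (p * (1 - p)) / (1 - s)) := ⟨_, rfl⟩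
  have hu0gt : u0 > 1 - p := by rw [hu0_def, ← harg]; exact hcond
  have hu0pos : 0 < u0 := lt_of_le_of_lt (by linarith) hu0gt
  have hargnn : 0 ≤ s * (p * (1 - p)) / (1 - s) :=
    div_nonneg (mul_nonneg (by linarith) hq0) (by linarith)
  have hu0sq : (1 - s) * u0 ^ 2 = s * (p * (1 - p)) := by
    rw [hu0_def, Real.sq_sqrt hargnn]
    field_simp
  -- rewrite the sqrt in the RHS
  have hsqrtM : Real.sqrt ((2 - θ) ^ 2 / 4 * (1 - (2 - θ) ^ 2 / 4) * (p * (1 - p)))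
      = (1 - s) * u0 := by
    have h1 : (2 - θ) ^ 2 / 4 * (1 - (2 - θ) ^ 2 / 4) * (p * (1 - p)) = ((1 - s) * u0) ^ 2 := by
      rw [← hs_def, mul_pow]
      nlinarith [hu0sq]
    rw [h1, Real.sqrt_sq (mul_nonneg (by linarith) hu0pos.le)]
  rw [hsqrtM]
  -- rewrite the function
  have hfun : (fun η : ℝ => -η + (2 - θ) ^ 2 * η * (η + 1) / (4 * (η + 1 - p)))
      = fun η : ℝ => -η + s * η * (η + 1) / (η + 1 - p) := by
    funext η
    by_cases h : η + 1 - p = 0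
    · rw [h, mul_zero, div_zero, div_zero]
    · rw [hs_def]; field_simp
  rw [hfun]
  have hM : (2 - θ) ^ 2 * (2 * p - 1) / 4 = s * (2 * p - 1) := by rw [hs_def]; ring
  rw [hM]
  apply IsGreatest.csSup_eq
  constructor
  · -- attained at η0 = u0 - 1 + p
    refine ⟨u0 - 1 + p, by simp only [Set.mem_Ioi]; linarith, ?_⟩
    have hne : u0 - 1 + p + 1 - p ≠ 0 := by
      have h : u0 - 1 + p + 1 - p = u0 := by ring
      rw [h]; exact ne_of_gt hu0pos
    field_simp
    linear_combination hu0sq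
  · rintro y ⟨η, hη, rfl⟩
    simp only [Set.mem_Ioi] at hη
    have hu : 0 < η + 1 - p := by linarith
    rw [← sub_nonpos]
    have hkey : -η + s * η * (η + 1) / (η + 1 - p) -
        (-2 * ((1 - s) * u0) + 1 - p + s * (2 * p - 1))
        = (s - 1) * ((η + 1 - p) - u0) ^ 2 / (η + 1 - p) := by
      field_simp
      linear_combination hu0sq
    rw [hkey]
    apply div_nonpos_of_nonpos_of_nonneg
    · nlinarith [sq_nonneg ((η + 1 - p) - u0)]
    · linarith
end

section
/- Let ε ∈ (0,1) and θ > 0. Then the function x ↦ (e^{−θ} x^{1−ε} − 1)/(x − 1) attains a finite infimum over x ∈ (0,1), and this infimum lies in (0,1) whenever θ is sufficiently small; in particular, for θ → 0 the infimum converges to inf_{x∈(0,1)} (x^{1−ε} − 1)/(x − 1) = 1 − ε. -/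
open Set Filter

private lemma bern19 {p x : ℝ} (hp0 : 0 ≤ p) (hp1 : p ≤ 1) (hx : 0 ≤ x) :
    x ^ p ≤ 1 + p * (x - 1) := by
  have h := Real.geom_mean_le_arith_mean2_weighted hp0 (by linarith : (0:ℝ) ≤ 1 - p)
    hx zero_le_one (by ring)
  rw [Real.one_rpow, mul_one] at h
  linarith

private lemma lbgen19 {ε c x : ℝ} (hε : ε ∈ Set.Ioo (0:ℝ) 1) (hc0 : 0 < c) (hc1 : c ≤ 1)
    (hx : x ∈ Set.Ioo (0:ℝ) 1) : 1 - ε ≤ (c * x ^ (1 - ε) - 1) / (x - 1) := by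
  have hx1 : x - 1 < 0 := by linarith [hx.2]
  rw [le_div_iff_of_neg hx1]
  have hb := bern19 (p := 1 - ε) (by linarith [hε.2]) (by linarith [hε.1]) hx.1.le
  have hxp : (0:ℝ) ≤ x ^ (1 - ε) := Real.rpow_nonneg hx.1.le _
  nlinarith

private lemma lb19 {ε θ x : ℝ} (hε : ε ∈ Set.Ioo (0:ℝ) 1) (hθ : 0 ≤ θ)
    (hx : x ∈ Set.Ioo (0:ℝ) 1) :
    1 - ε ≤ (Real.exp (-θ) * x ^ (1 - ε) - 1) / (x - 1) :=
  lbgen19 hε (Real.exp_pos _) (Real.exp_le_one_iff.mpr (by linarith)) hx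

private lemma lb019 {ε x : ℝ} (hε : ε ∈ Set.Ioo (0:ℝ) 1) (hx : x ∈ Set.Ioo (0:ℝ) 1) :
    1 - ε ≤ (x ^ (1 - ε) - 1) / (x - 1) := by
  have := lbgen19 (c := 1) hε one_pos le_rfl hx
  rwa [one_mul] at this

private lemma slope_lim19 {ε : ℝ} (hε : ε ∈ Set.Ioo (0:ℝ) 1) :
    Tendsto (fun x : ℝ => (x ^ (1 - ε) - 1) / (x - 1)) (nhdsWithin 1 (Set.Iio 1))
      (nhds (1 - ε)) := by
  have hd : HasDerivAt (fun x : ℝ => x ^ (1 - ε)) (1 - ε) 1 := by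
    have := Real.hasDerivAt_rpow_const (x := (1:ℝ)) (p := 1 - ε) (Or.inl one_ne_zero)
    simpa using this
  have h1 := hasDerivAt_iff_tendsto_slope.mp hd
  have h2 : Tendsto (slope (fun x : ℝ => x ^ (1 - ε)) 1) (nhdsWithin 1 (Set.Iio 1))
      (nhds (1 - ε)) :=
    h1.mono_left (nhdsWithin_mono _ (fun x hx => ne_of_lt hx))
  refine Tendsto.congr (fun x => ?_) h2
  simp [slope_fun_def_field, Real.one_rpow]

private lemma exists_lt19 {ε c : ℝ} (hε : ε ∈ Set.Ioo (0:ℝ) 1) (hc : 1 - ε < c) :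
    ∃ x ∈ Set.Ioo (0:ℝ) 1, (x ^ (1 - ε) - 1) / (x - 1) < c := by
  have hev : ∀ᶠ x in nhdsWithin (1:ℝ) (Set.Iio 1), (x ^ (1 - ε) - 1) / (x - 1) < c :=
    (slope_lim19 hε).eventually_lt_const hc
  have hmem : Set.Ioo (0:ℝ) 1 ∈ nhdsWithin (1:ℝ) (Set.Iio 1) :=
    Ioo_mem_nhdsLT_of_mem ⟨by norm_num, le_refl 1⟩
  obtain ⟨x, hx1, hx2⟩ := (hev.and (eventually_of_mem hmem fun x hx => hx)).exists
  exact ⟨x, hx2, hx1⟩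

/-- for ε ∈ (0,1): (a) for every θ > 0 the function
x ↦ (e^{−θ}x^{1−ε} − 1)/(x − 1) attains a finite infimum over (0,1);
(b) for θ sufficiently small this infimum lies in (0,1);
(c) the infimum tends to 1 − ε as θ → 0⁺;
(d) inf_{x∈(0,1)} (x^{1−ε} − 1)/(x − 1) = 1 − ε. -/
theorem stmt_19 (ε : ℝ) (hε : ε ∈ Set.Ioo (0 : ℝ) 1) :
    (∀ θ > (0 : ℝ), ∃ x ∈ Set.Ioo (0 : ℝ) 1,
      IsLeast ((fun x : ℝ => (Real.exp (-θ) * x ^ (1 - ε) - 1) / (x - 1)) '' Set.Ioo 0 1)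
        ((Real.exp (-θ) * x ^ (1 - ε) - 1) / (x - 1))) ∧
    (∃ θ₀ > (0 : ℝ), ∀ θ : ℝ, 0 < θ → θ < θ₀ →
      sInf ((fun x : ℝ => (Real.exp (-θ) * x ^ (1 - ε) - 1) / (x - 1)) '' Set.Ioo 0 1) ∈
        Set.Ioo (0 : ℝ) 1) ∧
    Tendsto
      (fun θ : ℝ =>
        sInf ((fun x : ℝ => (Real.exp (-θ) * x ^ (1 - ε) - 1) / (x - 1)) '' Set.Ioo 0 1))
      (nhdsWithin 0 (Set.Ioi 0)) (nhds (1 - ε)) ∧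
    sInf ((fun x : ℝ => (x ^ (1 - ε) - 1) / (x - 1)) '' Set.Ioo 0 1) = 1 - ε := by
  obtain ⟨hε0, hε1⟩ := hε
  have hε' : ε ∈ Set.Ioo (0:ℝ) 1 := ⟨hε0, hε1⟩
  have hp : (0:ℝ) < 1 - ε := by linarith
  set p : ℝ := 1 - ε with hpdef
  have hhalf : (1/2 : ℝ) ∈ Set.Ioo (0:ℝ) 1 := by norm_num
  -- bddBelow / nonempty of images
  have hbdd : ∀ θ : ℝ, 0 ≤ θ → BddBelow
      ((fun x : ℝ => (Real.exp (-θ) * x ^ p - 1) / (x - 1)) '' Set.Ioo 0 1) := by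
    intro θ hθ
    exact ⟨1 - ε, by rintro y ⟨x, hx, rfl⟩; exact lb19 hε' hθ hx⟩
  have hne : ∀ θ : ℝ,
      ((fun x : ℝ => (Real.exp (-θ) * x ^ p - 1) / (x - 1)) '' Set.Ioo 0 1).Nonempty :=
    fun θ => ⟨_, ⟨1/2, hhalf, rfl⟩⟩
  -- lower bound on sInf
  have hsinf_lb : ∀ θ : ℝ, 0 ≤ θ →
      1 - ε ≤ sInf ((fun x : ℝ => (Real.exp (-θ) * x ^ p - 1) / (x - 1)) '' Set.Ioo 0 1) := by
    intro θ hθ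
    exact le_csInf (hne θ) (by rintro y ⟨x, hx, rfl⟩; exact lb19 hε' hθ hx)
  -- pointwise upper comparison with θ = 0 function
  have hcmp : ∀ θ : ℝ, 0 ≤ θ → ∀ x ∈ Set.Ioo (0:ℝ) 1,
      (Real.exp (-θ) * x ^ p - 1) / (x - 1) ≤ (x ^ p - 1) / (x - 1) + θ / (1 - x) := by
    intro θ hθ x hx
    have hx1 : x - 1 < 0 := by linarith [hx.2]
    have h1x : (0:ℝ) < 1 - x := by linarith [hx.2]
    have hkey : (Real.exp (-θ) * x ^ p - 1) / (x - 1) - (x ^ p - 1) / (x - 1)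
        = (1 - Real.exp (-θ)) * x ^ p / (1 - x) := by
      rw [div_sub_div_same,
        show Real.exp (-θ) * x ^ p - 1 - (x ^ p - 1) = -((1 - Real.exp (-θ)) * x ^ p) by ring,
        show x - 1 = -(1 - x) by ring, neg_div_neg_eq]
    have he1 : Real.exp (-θ) ≤ 1 := Real.exp_le_one_iff.mpr (by linarith)
    have he2 : 1 - θ ≤ Real.exp (-θ) := by
      have := Real.add_one_le_exp (-θ); linarith
    have hxp0 : (0:ℝ) ≤ x ^ p := Real.rpow_nonneg hx.1.le _
    have hxp1 : x ^ p ≤ 1 := Real.rpow_le_one hx.1.le hx.2.le hp.le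
    have hnum : (1 - Real.exp (-θ)) * x ^ p ≤ θ := by nlinarith
    have : (1 - Real.exp (-θ)) * x ^ p / (1 - x) ≤ θ / (1 - x) :=
      (div_le_div_iff_of_pos_right h1x).mpr hnum
    linarith [hkey ▸ this]
  -- Part (d)
  have partd : sInf ((fun x : ℝ => (x ^ p - 1) / (x - 1)) '' Set.Ioo 0 1) = 1 - ε := by
    have hbdd0 : BddBelow ((fun x : ℝ => (x ^ p - 1) / (x - 1)) '' Set.Ioo 0 1) :=
      ⟨1 - ε, by rintro y ⟨x, hx, rfl⟩; exact lb019 hε' hx⟩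
    refine le_antisymm ?_ ?_
    · refine le_of_forall_gt_imp_ge_of_dense fun c hc => ?_
      obtain ⟨x, hx, hxc⟩ := exists_lt19 hε' hc
      exact (csInf_le hbdd0 ⟨x, hx, rfl⟩).trans hxc.le
    · exact le_csInf ⟨_, ⟨1/2, hhalf, rfl⟩⟩ (by rintro y ⟨x, hx, rfl⟩; exact lb019 hε' hx)
  -- Part (c)
  have partc : Tendsto
      (fun θ : ℝ =>
        sInf ((fun x : ℝ => (Real.exp (-θ) * x ^ p - 1) / (x - 1)) '' Set.Ioo 0 1))
      (nhdsWithin 0 (Set.Ioi 0)) (nhds (1 - ε)) := by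
    rw [Metric.tendsto_nhdsWithin_nhds]
    intro η hη
    obtain ⟨x, hx, hxc⟩ := exists_lt19 hε' (show 1 - ε < 1 - ε + η/2 by linarith)
    have h1x : (0:ℝ) < 1 - x := by linarith [hx.2]
    refine ⟨(η/2) * (1 - x), by positivity, fun θ hθ hd => ?_⟩
    rw [Real.dist_eq] at hd ⊢
    rw [sub_zero, abs_of_pos hθ] at hd
    have hθ0 : (0:ℝ) ≤ θ := (le_of_lt hθ)
    have hub : sInf ((fun x : ℝ => (Real.exp (-θ) * x ^ p - 1) / (x - 1)) '' Set.Ioo 0 1)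
        ≤ (x ^ p - 1) / (x - 1) + θ / (1 - x) :=
      (csInf_le (hbdd θ hθ0) ⟨x, hx, rfl⟩).trans (hcmp θ hθ0 x hx)
    have hθx : θ / (1 - x) < η / 2 := by
      rw [div_lt_iff₀ h1x]; linarith
    have hlb := hsinf_lb θ hθ0
    rw [abs_lt]
    constructor <;> [linarith; linarith]
  -- Part (b)
  have partb : ∃ θ₀ > (0 : ℝ), ∀ θ : ℝ, 0 < θ → θ < θ₀ →
      sInf ((fun x : ℝ => (Real.exp (-θ) * x ^ p - 1) / (x - 1)) '' Set.Ioo 0 1) ∈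
        Set.Ioo (0 : ℝ) 1 := by
    have hev : ∀ᶠ θ in nhdsWithin (0:ℝ) (Set.Ioi 0),
        sInf ((fun x : ℝ => (Real.exp (-θ) * x ^ p - 1) / (x - 1)) '' Set.Ioo 0 1) < 1 :=
      partc.eventually_lt_const (by linarith : 1 - ε < 1)
    obtain ⟨u, hu, hsub⟩ := mem_nhdsGT_iff_exists_Ioo_subset.mp hev
    refine ⟨u, hu, fun θ hθ1 hθ2 => ?_⟩
    exact ⟨lt_of_lt_of_le (by linarith) (hsinf_lb θ hθ1.le), hsub ⟨hθ1, hθ2⟩⟩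
  -- Part (a)
  have parta : ∀ θ > (0 : ℝ), ∃ x ∈ Set.Ioo (0 : ℝ) 1,
      IsLeast ((fun x : ℝ => (Real.exp (-θ) * x ^ p - 1) / (x - 1)) '' Set.Ioo 0 1)
        ((Real.exp (-θ) * x ^ p - 1) / (x - 1)) := by
    intro θ hθ
    set f : ℝ → ℝ := fun x => (Real.exp (-θ) * x ^ p - 1) / (x - 1) with hf
    have hcont : ContinuousOn f (Set.Ioo (0:ℝ) 1) := by
      apply ContinuousOn.div
      · exact (continuousOn_const.mul (ContinuousOn.rpow_const continuousOn_id
          fun x hx => Or.inl (ne_of_gt hx.1))).sub continuousOn_const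
      · exact continuousOn_id.sub continuousOn_const
      · intro x hx; exact sub_ne_zero.mpr (ne_of_lt hx.2)
    set x₀ : ℝ := Real.exp (-(θ/ε) - 1) with hx₀def
    have hx₀ : x₀ ∈ Set.Ioo (0:ℝ) 1 := by
      constructor
      · exact Real.exp_pos _
      · apply Real.exp_lt_one_iff.mpr
        have : 0 < θ / ε := div_pos hθ hε0
        linarith
    have hx₀1 : x₀ - 1 < 0 := by linarith [hx₀.2]
    have hfx₀ : f x₀ < 1 := by
      rw [hf]
      simp only
      rw [div_lt_iff_of_neg hx₀1, one_mul]
      have hpow : x₀ ^ p = Real.exp ((-(θ/ε) - 1) * p) := by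
        rw [hx₀def, ← Real.exp_mul]
      rw [hpow, ← Real.exp_add]
      have h1 : θ / ε * ε = θ := div_mul_cancel₀ θ (ne_of_gt hε0)
      have : -(θ/ε) - 1 < -θ + (-(θ/ε) - 1) * p := by
        rw [hpdef]; nlinarith
      have h2 : x₀ < Real.exp (-θ + (-(θ/ε) - 1) * p) := by
        rw [hx₀def]
        exact Real.exp_lt_exp.mpr this
      linarith
    -- limit at 0
    have h0 : Tendsto f (nhdsWithin 0 (Set.Ioi 0)) (nhds 1) := by
      have hr : Tendsto (fun x : ℝ => x ^ p) (nhdsWithin 0 (Set.Ioi 0)) (nhds 0) := by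
        have hc : ContinuousAt (fun x : ℝ => x ^ p) 0 :=
          Real.continuousAt_rpow_const 0 p (Or.inr hp.le)
        have h := hc.tendsto
        rw [Real.zero_rpow (ne_of_gt hp)] at h
        exact h.mono_left nhdsWithin_le_nhds
      have hnum : Tendsto (fun x : ℝ => Real.exp (-θ) * x ^ p - 1)
          (nhdsWithin 0 (Set.Ioi 0)) (nhds (-1)) := by
        have := ((tendsto_const_nhds (x := Real.exp (-θ))).mul hr).sub (tendsto_const_nhds (x := (1:ℝ)))
        simpa using this
      have hden : Tendsto (fun x : ℝ => x - 1) (nhdsWithin 0 (Set.Ioi 0)) (nhds (-1)) := by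
        have h : Tendsto (fun x : ℝ => x - 1) (nhds 0) (nhds ((0:ℝ) - 1)) :=
          (continuous_id.sub continuous_const).tendsto (0:ℝ)
        have := h.mono_left (nhdsWithin_le_nhds (s := Set.Ioi 0))
        simpa using this
      have := hnum.div hden (by norm_num)
      rw [neg_div_neg_eq, div_one] at this
      exact this
    -- limit at 1
    have h1 : Tendsto f (nhdsWithin 1 (Set.Iio 1)) atTop := by
      have hfeq : f = fun x => (1 - Real.exp (-θ) * x ^ p) * (1 - x)⁻¹ := by
        funext x
        rw [hf]
        simp only
        rw [show ((Real.exp (-θ) * x ^ p - 1) / (x - 1))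
            = (1 - Real.exp (-θ) * x ^ p) / (1 - x) by
          rw [← neg_div_neg_eq, neg_sub, neg_sub], div_eq_mul_inv]
      rw [hfeq]
      have hC : (0:ℝ) < 1 - Real.exp (-θ) := by
        have := Real.exp_lt_one_iff.mpr (by linarith : -θ < 0); linarith
      apply Filter.Tendsto.pos_mul_atTop hC
      · have hc : ContinuousAt (fun x : ℝ => 1 - Real.exp (-θ) * x ^ p) 1 := by
          have h := Real.continuousAt_rpow_const 1 p (Or.inl one_ne_zero)
          exact continuousAt_const.sub (continuousAt_const.mul h)
        have h := hc.tendsto.mono_left (nhdsWithin_le_nhds (s := Set.Iio 1))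
        simpa [Real.one_rpow] using h
      · apply tendsto_inv_nhdsGT_zero.comp
        apply tendsto_nhdsWithin_of_tendsto_nhds_of_eventually_within
        · have h : Tendsto (fun x : ℝ => 1 - x) (nhds 1) (nhds ((1:ℝ) - 1)) :=
            (continuous_const.sub continuous_id).tendsto (1:ℝ)
          have := h.mono_left (nhdsWithin_le_nhds (s := Set.Iio 1))
          simpa using this
        · filter_upwards [self_mem_nhdsWithin] with x hx
          exact sub_pos.mpr (Set.mem_Iio.mp hx)
    set c : ℝ := (f x₀ + 1) / 2 with hcdef
    have hc1 : f x₀ < c := by rw [hcdef]; linarith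
    have hc2 : c < 1 := by rw [hcdef]; linarith
    have hEv0 : {x : ℝ | c < f x} ∈ nhdsWithin (0:ℝ) (Set.Ioi 0) :=
      h0.eventually_const_lt hc2
    have hEv1 : {x : ℝ | c < f x} ∈ nhdsWithin (1:ℝ) (Set.Iio 1) :=
      h1.eventually_gt_atTop c
    obtain ⟨a', ha', hsub0⟩ := mem_nhdsGT_iff_exists_Ioo_subset.mp hEv0
    obtain ⟨b', hb', hsub1⟩ := mem_nhdsLT_iff_exists_Ioo_subset.mp hEv1
    set a : ℝ := min a' x₀ with hadef
    set b : ℝ := max b' x₀ with hbdef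
    have ha0 : 0 < a := lt_min ha' hx₀.1
    have hb1 : b < 1 := max_lt hb' hx₀.2
    have hab : a ≤ b := le_trans (min_le_right _ _) (le_max_right _ _)
    have hIcc : Set.Icc a b ⊆ Set.Ioo (0:ℝ) 1 :=
      fun x hx => ⟨lt_of_lt_of_le ha0 hx.1, lt_of_le_of_lt hx.2 hb1⟩
    have hx₀ab : x₀ ∈ Set.Icc a b := ⟨min_le_right _ _, le_max_right _ _⟩
    obtain ⟨xm, hxm, hmin⟩ := isCompact_Icc.exists_isMinOn ⟨x₀, hx₀ab⟩ (hcont.mono hIcc)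
    refine ⟨xm, hIcc hxm, ⟨⟨xm, hIcc hxm, rfl⟩, ?_⟩⟩
    rintro y ⟨z, hz, rfl⟩
    by_cases hzc : z ∈ Set.Icc a b
    · exact isMinOn_iff.mp hmin z hzc
    · have hfz : c < f z := by
        rw [Set.mem_Icc, not_and_or] at hzc
        rcases hzc with h | h
        · exact hsub0 ⟨hz.1, lt_of_not_ge fun hle =>
            h (le_trans (min_le_left _ _) hle) |>.elim⟩
        · exact hsub1 ⟨lt_of_le_of_lt (le_max_left _ _) (lt_of_not_ge h), hz.2⟩
      have hmx₀ : f xm ≤ f x₀ := isMinOn_iff.mp hmin x₀ hx₀ab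
      have : f xm ≤ f z := by linarith
      exact this
  exact ⟨parta, partb, partc, partd⟩
end
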